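/- Let X_1,...,X_n be i.i.d. with density α x^{-α-1}·1{x ≥ 1}, and a_n^α = n^γ log n with γ ∈ (0,1). Then P(max_{2≤i≤n} X_1 X_i > a_n) → 1 as n → ∞, i.e. asymptotically every vertex is non-isolated. -/

import Mathlib

open MeasureTheory Filter Real Set

noncomputable def paretoMeasure (α : ℝ) : Measure ℝ :=
  MeasureTheory.volume.withDensity
    (fun x => ENNReal.ofReal (if 1 ≤ x then α * x ^ (-α - 1) else 0))

noncomputable def aSeq (α γ : ℝ) (n : ℕ) : ℝ := ((n : ℝ) ^ γ * Real.log n) ^ (1/α)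

/-! Since `X₁ ≥ 1` almost surely, the event contains `{max_{i ≥ 2} X_i > a_n}`, whose probability
is `1 - (1 - a_n^{-α})^{n-1} ≥ 1 - exp(-(n-1) / (n^γ log n))`; the exponent tends to `-∞`
because `γ < 1`. -/

open Topology

section Pareto

variable {α : ℝ}

lemma lintegral_Ioi_pareto_density (hα : 0 < α) {t : ℝ} (ht : 0 < t) :
    ∫⁻ x in Ioi t, ENNReal.ofReal (α * x ^ (-α - 1)) = ENNReal.ofReal (t ^ (-α)) := by
  have hexp : -α - 1 < -1 := by linarith
  have hint : IntegrableOn (fun x : ℝ => α * x ^ (-α - 1)) (Ioi t) :=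
    (integrableOn_Ioi_rpow_of_lt hexp ht).const_mul α
  have hnonneg : 0 ≤ᵐ[volume.restrict (Ioi t)] fun x : ℝ => α * x ^ (-α - 1) :=
    (ae_restrict_iff' measurableSet_Ioi).2 <| .of_forall fun x hx =>
      mul_nonneg hα.le (rpow_nonneg (ht.trans hx).le _)
  rw [← ofReal_integral_eq_lintegral_ofReal hint hnonneg, integral_const_mul,
    integral_Ioi_rpow_of_lt hexp ht, sub_add_cancel]
  congr 1
  field_simp

lemma paretoMeasure_Ioi (hα : 0 < α) {t : ℝ} (ht : 1 ≤ t) :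
    paretoMeasure α (Ioi t) = ENNReal.ofReal (t ^ (-α)) := by
  rw [paretoMeasure, withDensity_apply _ measurableSet_Ioi,
    setLIntegral_congr_fun measurableSet_Ioi fun x hx => by rw [if_pos (ht.trans hx.le)]]
  exact lintegral_Ioi_pareto_density hα (one_pos.trans_le ht)

lemma paretoMeasure_Iic_one : paretoMeasure α (Iic 1) = 0 := by
  rw [paretoMeasure, withDensity_apply _ measurableSet_Iic, ← setLIntegral_congr Iio_ae_eq_Iic,
    setLIntegral_congr_fun measurableSet_Iio fun x hx => by rw [if_neg (not_le.2 hx)]]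
  simp

lemma ae_one_le_paretoMeasure : ∀ᵐ x ∂paretoMeasure α, 1 ≤ x := by
  simp only [ae_iff, not_le]
  exact measure_mono_null Iio_subset_Iic_self paretoMeasure_Iic_one

lemma isProbabilityMeasure_paretoMeasure (hα : 0 < α) :
    IsProbabilityMeasure (paretoMeasure α) := by
  constructor
  rw [← Iic_union_Ioi (a := (1 : ℝ)), measure_union (Iic_disjoint_Ioi le_rfl) measurableSet_Ioi,
    paretoMeasure_Iic_one, paretoMeasure_Ioi hα le_rfl]
  simp

lemma paretoMeasure_real_Iic (hα : 0 < α) {t : ℝ} (ht : 1 ≤ t) :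
    (paretoMeasure α).real (Iic t) = 1 - t ^ (-α) := by
  have := isProbabilityMeasure_paretoMeasure hα
  rw [← compl_Ioi, probReal_compl_eq_one_sub measurableSet_Ioi, measureReal_def,
    paretoMeasure_Ioi hα ht, ENNReal.toReal_ofReal (by positivity)]

end Pareto

lemma measureReal_pi_exists_mem {ι X : Type*} [Fintype ι] [MeasurableSpace X] (μ : Measure X)
    [IsProbabilityMeasure μ] {s : Set X} (hs : MeasurableSet s) :
    (Measure.pi fun _ : ι => μ).real {y | ∃ i, y i ∈ s} = 1 - μ.real sᶜ ^ Fintype.card ι := by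
  have hset : {y : ι → X | ∃ i, y i ∈ s} = (univ.pi fun _ => sᶜ)ᶜ := by
    ext y; simp
  rw [hset, probReal_compl_eq_one_sub (.univ_pi fun _ => hs.compl), measureReal_def,
    Measure.pi_pi, Finset.prod_const, ENNReal.toReal_pow, Finset.card_univ, measureReal_def]

lemma measureReal_exists_lt_le_prod_exists_mul_lt {ι : Type*} {ν : Measure ℝ}
    [IsProbabilityMeasure ν] (hν : ∀ᵐ x ∂ν, 1 ≤ x) (μ : Measure (ι → ℝ)) [IsFiniteMeasure μ]
    {a : ℝ} (ha : 0 ≤ a) :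
    μ.real {y | ∃ i, a < y i} ≤ (ν.prod μ).real {p | ∃ i, a < p.1 * p.2 i} := by
  have hν1 : ν.real (Ici 1) = 1 := by
    rw [measureReal_def, (ae_mem_iff_measure_eq measurableSet_Ici.nullMeasurableSet).1 hν]
    simp
  have hsub : Ici 1 ×ˢ {y : ι → ℝ | ∃ i, a < y i} ⊆ {p | ∃ i, a < p.1 * p.2 i} := by
    rintro ⟨x, y⟩ ⟨hx, i, hi⟩
    exact ⟨i, hi.trans_le (le_mul_of_one_le_left (ha.trans hi.le) hx)⟩
  calc μ.real {y | ∃ i, a < y i}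
      = (ν.prod μ).real (Ici 1 ×ˢ {y : ι → ℝ | ∃ i, a < y i}) := by
        rw [measureReal_prod_prod, hν1, one_mul]
    _ ≤ _ := measureReal_mono hsub

lemma le_measureReal_pareto_prod_pi_exists_lt_mul {α : ℝ} (hα : 0 < α) (m : ℕ) {a : ℝ} (ha : 1 ≤ a) :
    1 - (1 - a ^ (-α)) ^ m ≤ ((paretoMeasure α).prod
      (Measure.pi fun _ : Fin m => paretoMeasure α)).real {p | ∃ i, a < p.1 * p.2 i} := by
  have := isProbabilityMeasure_paretoMeasure hα
  have hpi := measureReal_pi_exists_mem (ι := Fin m) (paretoMeasure α) (measurableSet_Ioi (a := a))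
  rw [compl_Ioi, paretoMeasure_real_Iic hα ha, Fintype.card_fin] at hpi
  rw [← hpi]
  exact measureReal_exists_lt_le_prod_exists_mul_lt ae_one_le_paretoMeasure _ (by linarith)

lemma tendsto_one_sub_pow_nhds_zero {β : Type*} {l : Filter β} {p : β → ℝ} {m : β → ℕ}
    (hp : ∀ᶠ x in l, p x ≤ 1) (hmp : Tendsto (fun x => m x * p x) l atTop) :
    Tendsto (fun x => (1 - p x) ^ m x) l (𝓝 0) := by
  refine squeeze_zero' (hp.mono fun x hx => pow_nonneg (sub_nonneg.2 hx) _)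
    (hp.mono fun x hx => ?_) (tendsto_exp_atBot.comp (tendsto_neg_atTop_atBot.comp hmp))
  calc (1 - p x) ^ m x ≤ exp (-p x) ^ m x :=
        pow_le_pow_left₀ (sub_nonneg.2 hx) (by linarith [add_one_le_exp (-p x)]) _
    _ = exp (-(m x * p x)) := by rw [← exp_nat_mul]; ring_nf

lemma tendsto_rpow_div_log_atTop {r : ℝ} (hr : 0 < r) :
    Tendsto (fun x => x ^ r / log x) atTop atTop := by
  have h := ((tendsto_exp_div_pow_atTop 1).comp
    (tendsto_log_atTop.const_mul_atTop hr)).const_mul_atTop hr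
  refine h.congr' ((eventually_gt_atTop 1).mono fun x hx => ?_)
  have hlog : log x ≠ 0 := (log_pos hx).ne'
  simp only [Function.comp_apply, pow_one, rpow_def_of_pos (one_pos.trans hx)]
  field_simp

lemma tendsto_natSub_one_mul_inv_rpow_mul_log_atTop {γ : ℝ} (hγ : γ < 1) :
    Tendsto (fun n : ℕ => ((n - 1 : ℕ) : ℝ) * ((n : ℝ) ^ γ * log n)⁻¹) atTop atTop := by
  refine tendsto_atTop_mono' atTop ?_ (((tendsto_rpow_div_log_atTop (sub_pos.2 hγ)).comp
    tendsto_natCast_atTop_atTop).const_mul_atTop one_half_pos)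
  filter_upwards [eventually_ge_atTop 2] with n hn
  have hn' : (2 : ℝ) ≤ n := by exact_mod_cast hn
  have hlog : 0 < log n := log_pos (by linarith)
  have hhalf : (n : ℝ) / 2 ≤ ((n - 1 : ℕ) : ℝ) := by
    rw [Nat.cast_sub (by omega)]; push_cast; linarith
  calc 1 / 2 * ((n : ℝ) ^ (1 - γ) / log n) = (n : ℝ) / 2 * ((n : ℝ) ^ γ * log n)⁻¹ := by
        rw [rpow_sub (by linarith), rpow_one]; field_simp
    _ ≤ _ := by gcongr

lemma one_le_rpow_mul_log_natCast {γ : ℝ} (hγ : 0 ≤ γ) {n : ℕ} (hn : 3 ≤ n) :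
    1 ≤ (n : ℝ) ^ γ * log n := by
  have hn' : (3 : ℝ) ≤ n := by exact_mod_cast hn
  have hlog : 1 ≤ log n := by
    rw [le_log_iff_exp_le (by linarith)]
    linarith [exp_one_lt_d9]
  nlinarith [one_le_rpow (by linarith : (1 : ℝ) ≤ n) hγ]

lemma aSeq_rpow_neg {α γ : ℝ} (hα : α ≠ 0) {n : ℕ} (hn : 0 ≤ (n : ℝ) ^ γ * log n) :
    aSeq α γ n ^ (-α) = ((n : ℝ) ^ γ * log n)⁻¹ := by
  rw [aSeq, ← rpow_mul hn, one_div_mul_eq_div, neg_div_self hα, rpow_neg_one]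

theorem stmt4 (α γ : ℝ) (hα : 0 < α) (hγ1 : 0 < γ) (hγ2 : γ < 1) :
    Tendsto (fun n : ℕ =>
      (((paretoMeasure α).prod (Measure.pi fun _ : Fin (n-1) => paretoMeasure α))
        {p : ℝ × (Fin (n-1) → ℝ) | ∃ i, p.1 * p.2 i > aSeq α γ n}).toReal)
      atTop (nhds 1) := by
  have := isProbabilityMeasure_paretoMeasure hα
  have hb : ∀ᶠ n : ℕ in atTop, 1 ≤ (n : ℝ) ^ γ * log n :=
    (eventually_ge_atTop 3).mono fun n => one_le_rpow_mul_log_natCast hγ1.le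
  have hlim : Tendsto (fun n : ℕ => 1 - (1 - ((n : ℝ) ^ γ * log n)⁻¹) ^ (n - 1)) atTop (𝓝 1) := by
    simpa using tendsto_const_nhds.sub (tendsto_one_sub_pow_nhds_zero
      (hb.mono fun n => inv_le_one_of_one_le₀) (tendsto_natSub_one_mul_inv_rpow_mul_log_atTop hγ2))
  refine tendsto_of_tendsto_of_tendsto_of_le_of_le' hlim tendsto_const_nhds ?_
    (.of_forall fun _ => measureReal_le_one)
  filter_upwards [hb] with n hn
  rw [← aSeq_rpow_neg hα.ne' (by linarith)]
  exact le_measureReal_pareto_prod_pi_exists_lt_mul hα _ (one_le_rpow hn (by positivity))
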